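/- Let λ_M = arccos((M−1)/M) and define the hitting time T_M = π/(2·λ_M). Then T_M/√M → π/(2√2) as M → ∞; in particular T_M = O(√M). -/

import Mathlib

open Filter Asymptotics

/-- `λ_M = arccos((M−1)/M)`, the argument of the unit-modulus eigenvalue
`(M−1 + i√(2M−1))/M` of the reduced transition matrix of the star-graph walk. -/
noncomputable def starLam (M : ℕ) : ℝ :=
  Real.arccos (((M : ℝ) - 1) / M)

/-- The hitting time `T_M = π/(2 λ_M)`. -/
noncomputable def starT (M : ℕ) : ℝ :=
  Real.pi / (2 * starLam M)

/-!
Since `cos λ_M = 1 - 1/M`, the half-angle formula gives `sin (λ_M / 2) = 1 / √(2M)`, hence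
`T_M / √M = π / (2√2) · sinc (λ_M / 2)`. As `λ_M → 0` and `sinc` is continuous with
`sinc 0 = 1`, the quotient tends to `π / (2√2)`.
-/

open Real Topology

theorem Real.sin_half_arccos {x : ℝ} (hx₁ : -1 ≤ x) (hx₂ : x ≤ 1) :
    sin (arccos x / 2) = √((1 - x) / 2) := by
  rw [sin_half_eq_sqrt (arccos_nonneg x) (by linarith [arccos_le_pi x, pi_pos]),
    cos_arccos hx₁ hx₂]

theorem starLam_pos (M : ℕ) : 0 < starLam M := by
  refine arccos_pos.mpr ?_
  rcases M.eq_zero_or_pos with rfl | hM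
  · simp
  · rw [div_lt_one (by exact_mod_cast hM)]
    linarith

theorem sin_half_starLam {M : ℕ} (hM : M ≠ 0) : sin (starLam M / 2) = (√(2 * M))⁻¹ := by
  have hM' : (1 : ℝ) ≤ M := by exact_mod_cast Nat.one_le_iff_ne_zero.mpr hM
  have hM₀ : (M : ℝ) ≠ 0 := by positivity
  rw [starLam, sin_half_arccos, ← sqrt_inv]
  · congr 1
    field_simp
    ring
  · rw [le_div_iff₀ (by positivity)]
    linarith
  · rw [div_le_one (by positivity)]
    linarith

theorem starT_div_sqrt_eq {M : ℕ} (hM : M ≠ 0) :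
    starT M / √M = π / (2 * √2) * sinc (starLam M / 2) := by
  have hlam := starLam_pos M
  have hM₀ : (0 : ℝ) < √M := sqrt_pos.mpr (by positivity)
  rw [sinc_of_ne_zero (by positivity), sin_half_starLam hM, sqrt_mul zero_le_two, starT]
  field_simp
  norm_num

theorem tendsto_starLam_zero : Tendsto starLam atTop (𝓝 0) := by
  have h : Tendsto (fun M : ℕ => ((M : ℝ) - 1) / M) atTop (𝓝 1) := by
    have h₁ := (tendsto_inv_atTop_nhds_zero_nat (𝕜 := ℝ)).const_sub 1
    rw [sub_zero] at h₁
    refine h₁.congr' ?_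
    filter_upwards [eventually_ne_atTop 0] with M hM
    rw [sub_div, div_self (by exact_mod_cast hM), one_div]
  have h₂ := (continuous_arccos.tendsto 1).comp h
  rwa [arccos_one] at h₂

/-- `T_M/√M → π/(2√2)` as `M → ∞`; in particular `T_M = O(√M)`. -/
theorem starT_asymptotics :
    Tendsto (fun M : ℕ => starT M / Real.sqrt M) atTop
        (nhds (Real.pi / (2 * Real.sqrt 2))) ∧
      (fun M : ℕ => starT M) =O[atTop] fun M : ℕ => Real.sqrt M := by
  have hsinc : Tendsto (fun M : ℕ => sinc (starLam M / 2)) atTop (𝓝 1) := by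
    simpa [Function.comp_def] using
      (continuous_sinc.tendsto _).comp (tendsto_starLam_zero.div_const 2)
  have hlim : Tendsto (fun M : ℕ => starT M / √M) atTop (𝓝 (π / (2 * √2))) := by
    have h := hsinc.const_mul (π / (2 * √2))
    rw [mul_one] at h
    refine h.congr' ?_
    filter_upwards [eventually_ne_atTop 0] with M hM
    exact (starT_div_sqrt_eq hM).symm
  refine ⟨hlim, isBigO_of_div_tendsto_nhds ?_ _ hlim⟩
  filter_upwards [eventually_ne_atTop 0] with M hM hsqrt
  simp [hM] at hsqrt
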